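/- arXiv:1111.3787 — 2 statements merged into one kernel-verified Lean document; each statement's English description precedes it below -/
import Mathlib

section
/- Let r ≥ 4 be an integer, ζ a primitive 2^r-th root of unity in ℂ, K = ℚ(ζ + ζ^{-1}), and α = 4 + (ζ + ζ^{-1}) - 2(ζ² + ζ^{-2}) - (ζ³ + ζ^{-3}). Then N_{K/ℚ}(α) = 8. -/
/-!
Put `t = ζ + ζ⁻¹`, so that `α = (2 + t)² (2 - t)`. For `c ∈ ℚ` the conjugates of `ζ` over
`K = ℚ(t)` are `ζ` and `ζ⁻¹`, hence `N_{ℚ(ζ)/K}(ζ - c) = (ζ - c)(ζ⁻¹ - c) = c² - c t + 1`, and by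
transitivity of the norm `N_{K/ℚ}(c² - c t + 1) = N_{ℚ(ζ)/ℚ}(ζ - c) = Φ_{2^r}(c) = 1 + c^{2^{r-1}}`.
Taking `c = -1` and `c = 1` gives `N(2 + t) = N(2 - t) = 2`, so `N(α) = 2² · 2 = 8`.
-/

open scoped IntermediateField
open Polynomial IntermediateField

@[simp, norm_cast]
theorem IntermediateField.coe_ofNat {K L : Type*} [Field K] [Field L] [Algebra K L]
    (S : IntermediateField K L) (n : ℕ) [n.AtLeastTwo] : ((ofNat(n) : S) : L) = ofNat(n) := rfl

theorem Polynomial.eval_cyclotomic_two_pow_succ {R : Type*} [CommRing R] (k : ℕ) (c : R) :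
    eval c (cyclotomic (2 ^ (k + 1)) R) = 1 + c ^ 2 ^ k := by
  simp [cyclotomic_prime_pow_eq_geom_sum Nat.prime_two, Finset.sum_range_succ]

section

variable {K L : Type*} [Field K] [Field L] [Algebra K L]

theorem minpoly.eq_of_natDegree_eq_two {x : L} {p : K[X]} (hp : p.Monic) (hdeg : p.natDegree = 2)
    (hx : Polynomial.aeval x p = 0) (hxK : x ∉ Set.range (algebraMap K L)) : minpoly K x = p := by
  have hint : IsIntegral K x := ⟨p, hp, hx⟩
  have hdvd : minpoly K x ∣ p := minpoly.dvd K x hx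
  have hle := natDegree_le_of_dvd hdvd hp.ne_zero
  have hne_one : (minpoly K x).natDegree ≠ 1 := fun h => hxK (minpoly.natDegree_eq_one_iff.1 h)
  have hpos := minpoly.natDegree_pos hint
  exact (eq_of_monic_of_dvd_of_natDegree_le (minpoly.monic hint) hp hdvd (by omega)).symm

theorem IntermediateField.AdjoinSimple.norm_gen_eq_coeff_zero_minpoly {x : L}
    (hx : IsIntegral K x) :
    Algebra.norm K (AdjoinSimple.gen K x) =
      (-1) ^ (minpoly K x).natDegree * (minpoly K x).coeff 0 := by
  rw [← adjoin.powerBasis_gen hx, Algebra.PowerBasis.norm_gen_eq_coeff_zero_minpoly,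
    adjoin.powerBasis_gen hx, minpoly_gen, adjoin.powerBasis_dim]

end

namespace IsPrimitiveRoot

variable {n : ℕ}

theorem norm_gen_sub_eq_eval_cyclotomic {L : Type*} [Field L] [CharZero L] (hn : 2 < n) {ξ : L}
    (hξ : IsPrimitiveRoot ξ n) (c : ℚ) :
    Algebra.norm ℚ (AdjoinSimple.gen ℚ (ξ - algebraMap ℚ L c)) = eval c (cyclotomic n ℚ) := by
  have hint : IsIntegral ℚ (ξ - algebraMap ℚ L c) :=
    ((hξ.isIntegral (by omega)).tower_top (A := ℚ)).sub isIntegral_algebraMap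
  refine (AdjoinSimple.norm_gen_eq_coeff_zero_minpoly hint).trans ?_
  rw [minpoly.sub_algebraMap, ← cyclotomic_eq_minpoly_rat hξ (by omega), natDegree_comp,
    natDegree_cyclotomic]
  simp [(Nat.totient_even hn).neg_one_pow, coeff_zero_eq_eval_zero, eval_comp]

theorem notMem_adjoin_add_inv (hn : 2 < n) {ξ : ℂ} (hξ : IsPrimitiveRoot ξ n) :
    ξ ∉ ℚ⟮ξ + ξ⁻¹⟯ := by
  have hnorm : ‖ξ‖ = 1 := Complex.norm_eq_one_of_pow_eq_one hξ.pow_eq_one (by omega)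
  have hconj : (starRingEnd ℂ) ξ = ξ⁻¹ := (Complex.inv_eq_conj hnorm).symm
  have hreal : ℚ⟮ξ + ξ⁻¹⟯ ≤ (Complex.ofRealAm.restrictScalars ℚ).fieldRange := by
    refine adjoin_simple_le_iff.2 ⟨2 * ξ.re, ?_⟩
    simp [← hconj, Complex.add_conj]
  intro hmem
  obtain ⟨a, ha⟩ := hreal hmem
  have hsq : ξ ^ 2 = 1 := by
    have hinv : ξ⁻¹ = ξ := by rw [← hconj, ← ha]; simp
    rw [sq]
    nth_rw 2 [← hinv]
    exact mul_inv_cancel₀ (hξ.ne_zero (by omega))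
  have := Nat.le_of_dvd two_pos (hξ.dvd_of_pow_eq_one 2 hsq)
  omega

theorem norm_adjoin_add_inv_eq_eval_cyclotomic (hn : 2 < n) {ξ : ℂ} (hξ : IsPrimitiveRoot ξ n)
    (c : ℚ) (x : ℚ⟮ξ + ξ⁻¹⟯) (hx : (x : ℂ) = c ^ 2 - c * (ξ + ξ⁻¹) + 1) :
    Algebra.norm ℚ x = eval c (cyclotomic n ℚ) := by
  set y := ξ - algebraMap ℚ ℂ c with hy
  have hyK : y ∉ Set.range (algebraMap ℚ⟮ξ + ξ⁻¹⟯ ℂ) := by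
    rintro ⟨a, ha⟩
    apply hξ.notMem_adjoin_add_inv hn
    convert (a + algebraMap ℚ ℚ⟮ξ + ξ⁻¹⟯ c).2
    push_cast
    rw [← IntermediateField.algebraMap_apply, ha, hy]
    simp
  -- the minimal polynomial `X² - (ξ + ξ⁻¹) X + 1` of `ξ` over `ℚ(ξ + ξ⁻¹)`, shifted by `c`
  let p : ℚ⟮ξ + ξ⁻¹⟯[X] := (X + C (algebraMap ℚ _ c)) ^ 2 -
    C (AdjoinSimple.gen ℚ (ξ + ξ⁻¹)) * (X + C (algebraMap ℚ _ c)) + 1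
  have hp : p.Monic := by simp only [p]; monicity!
  have hpdeg : p.natDegree = 2 := by simp only [p]; compute_degree!
  have hpy : aeval y p = 0 := by
    simp only [p, y, map_add, map_sub, map_mul, map_pow, map_one, aeval_X, aeval_C,
      ← IsScalarTower.algebraMap_apply, sub_add_cancel, AdjoinSimple.algebraMap_gen]
    field_simp [hξ.ne_zero (by omega)]
    ring
  have hnorm_rel : Algebra.norm ℚ⟮ξ + ξ⁻¹⟯ (AdjoinSimple.gen ℚ⟮ξ + ξ⁻¹⟯ y) = x := by
    rw [AdjoinSimple.norm_gen_eq_coeff_zero_minpoly ⟨p, hp, hpy⟩,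
      minpoly.eq_of_natDegree_eq_two hp hpdeg hpy hyK, hpdeg]
    simp only [p, coeff_zero_eq_eval_zero, eval_add, eval_sub, eval_mul, eval_pow, eval_X, eval_C,
      eval_one, zero_add]
    apply Subtype.ext
    push_cast [hx, AdjoinSimple.coe_gen, eq_ratCast]
    ring
  have hle : ℚ⟮ξ + ξ⁻¹⟯ ≤ ℚ⟮y⟯ := by
    have hξy : ξ ∈ ℚ⟮y⟯ := by
      simpa [y] using add_mem (mem_adjoin_simple_self ℚ y) (IntermediateField.algebraMap_mem _ c)
    exact adjoin_simple_le_iff.2 (add_mem hξy (inv_mem hξy))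
  have hrestrict : ℚ⟮ξ + ξ⁻¹⟯⟮y⟯.restrictScalars ℚ = ℚ⟮y⟯ := by
    rw [← extendScalars_adjoin hle]
    rfl
  calc Algebra.norm ℚ x
      = Algebra.norm ℚ (Algebra.norm ℚ⟮ξ + ξ⁻¹⟯ (AdjoinSimple.gen ℚ⟮ξ + ξ⁻¹⟯ y)) := by
        rw [hnorm_rel]
    _ = Algebra.norm ℚ (AdjoinSimple.gen ℚ⟮ξ + ξ⁻¹⟯ y) := Algebra.norm_norm
    _ = Algebra.norm ℚ (AdjoinSimple.gen ℚ y) :=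
        (Algebra.norm_eq_of_algEquiv (equivOfEq hrestrict) _).symm
    _ = eval c (cyclotomic n ℚ) := hξ.norm_gen_sub_eq_eval_cyclotomic hn c

end IsPrimitiveRoot

/-- For `r ≥ 4`, `ζ` a primitive `2^r`-th root of unity,
`K = ℚ(ζ + ζ⁻¹)` and `α = 4 + (ζ + ζ⁻¹) - 2(ζ² + ζ⁻²) - (ζ³ + ζ⁻³)`,
one has `N_{K/ℚ}(α) = 8`. -/
theorem norm_alpha_eq_eight
    (r : ℕ) (hr : 4 ≤ r) (ζ : ℂ) (hζ : IsPrimitiveRoot ζ (2 ^ r))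
    (α : ℚ⟮ζ + ζ⁻¹⟯)
    (hα : (α : ℂ) = 4 + (ζ + ζ⁻¹) - 2 * (ζ ^ 2 + ζ⁻¹ ^ 2) - (ζ ^ 3 + ζ⁻¹ ^ 3)) :
    Algebra.norm ℚ α = 8 := by
  obtain ⟨k, rfl⟩ : ∃ k, r = k + 1 := ⟨r - 1, by omega⟩
  have hn : 2 < 2 ^ (k + 1) :=
    calc 2 < 2 ^ 2 := by norm_num
      _ ≤ 2 ^ (k + 1) := Nat.pow_le_pow_right two_pos (by omega)
  set t := AdjoinSimple.gen ℚ (ζ + ζ⁻¹)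
  have hfactor : α = (2 + t) ^ 2 * (2 - t) := by
    apply Subtype.ext
    push_cast [t, AdjoinSimple.coe_gen, hα]
    field_simp [hζ.ne_zero (by positivity)]
    ring
  have hnorm_add : Algebra.norm ℚ (2 + t) = 2 := by
    rw [hζ.norm_adjoin_add_inv_eq_eval_cyclotomic hn (-1) _
        (by push_cast [t, AdjoinSimple.coe_gen]; ring), eval_cyclotomic_two_pow_succ,
      (Nat.even_pow.2 ⟨even_two, by omega⟩).neg_one_pow]
    norm_num
  have hnorm_sub : Algebra.norm ℚ (2 - t) = 2 := by
    rw [hζ.norm_adjoin_add_inv_eq_eval_cyclotomic hn 1 _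
        (by push_cast [t, AdjoinSimple.coe_gen]; ring), eval_cyclotomic_two_pow_succ]
    norm_num
  rw [hfactor, map_mul, map_pow, hnorm_add, hnorm_sub]
  norm_num
end

section
/- Let p ≥ 7 be a prime, n = (p-1)/2, ζ a primitive p-th root of unity in ℂ, K = ℚ(ζ + ζ^{-1}), O_K = ℤ[ζ + ζ^{-1}], and e_j = ζ^j + ζ^{-j}. Let I be the ℤ-submodule of O_K spanned by {e_1, e_2, …, e_{n-1}, 2e_n}. Then I is not an ideal of O_K: specifically, e_n ∉ I, and the product e_1 · e_{n-1} (which lies in O_K) does not lie in I. -/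
/-!
Since `p` is prime, `ζ, ζ², …, ζ^(p-1)` are linearly independent over `ℚ`, so there is a
`ℚ`-linear functional `φ` on `ℂ` reading off the coefficient of `ζⁿ`. As `ζ^(-j) = ζ^(p-j)` with
`n < p - j`, `φ` sends `e_j` to `0` for `j < n` and `e_n` to `1`, hence maps the span `I` into
`2ℤ` while `φ(e_n) = 1`. The identity `e₁ e_{n-1} = e_n + e_{n-2}` (the Dickson recurrence for
`e_j`, a polynomial in `e₁ = ζ + ζ⁻¹`) gives `φ(e₁ e_{n-1}) = 1` as well.
-/

open Polynomial
open scoped IntermediateField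

theorem inv_pow_eq_pow_sub_of_pow_eq_one {M : Type*} [DivisionMonoid M] {ζ : M} {N j : ℕ}
    (hζ : ζ ^ N = 1) (hj : j ≤ N) : ζ⁻¹ ^ j = ζ ^ (N - j) := by
  rw [inv_pow]
  exact inv_eq_of_mul_eq_one_right (by rw [← pow_add, Nat.add_sub_cancel' hj, hζ])

theorem Polynomial.X_mul_dickson_one_one {R : Type*} [CommRing R] (j : ℕ) :
    X * dickson 1 (1 : R) (j + 1) = dickson 1 1 (j + 2) + dickson 1 1 j := by
  rw [dickson_add_two, C_1, one_mul, sub_add_cancel]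

theorem Polynomial.aeval_dickson_one_one_add_of_mul_eq_one {R : Type*} [CommRing R] {x y : R}
    (h : x * y = 1) (n : ℕ) : aeval (x + y) (dickson 1 (1 : ℤ) n) = x ^ n + y ^ n := by
  rw [aeval_def, eval₂_eq_eval_map, map_dickson, map_one, dickson_one_one_eval_add_inv x y h]

theorem IntermediateField.eq_aeval_dickson_of_coe_eq {K L : Type*} [Field K] [Field L]
    [Algebra K L] {S : IntermediateField K L} {x : L} (hx : x ≠ 0) {ξ a : S}
    (hξ : (ξ : L) = x + x⁻¹) {j : ℕ} (ha : (a : L) = x ^ j + x⁻¹ ^ j) :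
    a = aeval ξ (dickson 1 (1 : ℤ) j) :=
  Subtype.ext <| by
    rw [← IntermediateField.aeval_coe, hξ,
      aeval_dickson_one_one_add_of_mul_eq_one (mul_inv_cancel₀ hx), ha]

theorem LinearIndependent.exists_linearMap_apply_eq {K V W ι : Type*} [Field K] [AddCommGroup V]
    [Module K V] [AddCommGroup W] [Module K W] {v : ι → V} (hv : LinearIndependent K v)
    (g : ι → W) : ∃ f : V →ₗ[K] W, ∀ i, f (v i) = g i := by
  obtain ⟨f, hf⟩ := LinearMap.exists_extend ((Module.Basis.span hv).constr K g)
  refine ⟨f, fun i => ?_⟩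
  have := LinearMap.congr_fun hf (Module.Basis.span hv i)
  rwa [LinearMap.comp_apply, Module.Basis.constr_basis, Submodule.subtype_apply,
    Module.Basis.span_apply] at this

theorem Submodule.notMem_span_of_forall_map_mem {R M N : Type*} [Semiring R] [AddCommMonoid M]
    [Module R M] [AddCommMonoid N] [Module R N] (f : M →ₗ[R] N) {J : Submodule R N} {s : Set M}
    (hs : ∀ x ∈ s, f x ∈ J) {x : M} (hx : f x ∉ J) : x ∉ span R s :=
  fun h => hx ((span_le (p := J.comap f)).mpr hs h)

theorem one_notMem_span_int_two : (1 : ℚ) ∉ Submodule.span ℤ {(2 : ℚ)} := by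
  rw [Submodule.mem_span_singleton]
  rintro ⟨a, ha⟩
  rw [zsmul_eq_mul] at ha
  have : a * 2 = 1 := by exact_mod_cast ha
  omega

theorem notMem_span_union_two_mul {R : Type*} [Ring R] (ψ : R →ₗ[ℤ] ℚ) {s : Set R} {x y : R}
    (hs : ∀ z ∈ s, ψ z = 0) (hy : ψ y = 1) (hx : ψ x = 1) :
    x ∉ Submodule.span ℤ (s ∪ {2 * y}) := by
  refine Submodule.notMem_span_of_forall_map_mem ψ ?_ (hx ▸ one_notMem_span_int_two)
  rintro z (hz | rfl)
  · rw [hs z hz]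
    exact zero_mem _
  · rw [two_mul, map_add, hy, one_add_one_eq_two]
    exact Submodule.mem_span_singleton_self 2

namespace IsPrimitiveRoot

variable {L : Type*} [Field L] [CharZero L] {ζ : L}

theorem linearIndependent_rat_pow_succ {N : ℕ} (hζ : IsPrimitiveRoot ζ N) (hN : 0 < N) :
    LinearIndependent ℚ (fun i : Fin N.totient => ζ ^ ((i : ℕ) + 1)) := by
  have hdeg : (minpoly ℚ ζ).natDegree = N.totient := by
    rw [← cyclotomic_eq_minpoly_rat hζ hN, natDegree_cyclotomic]
  have hmul : LinearMap.ker (LinearMap.mulLeft ℚ ζ) = ⊥ :=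
    LinearMap.ker_eq_bot.mpr (mul_right_injective₀ (hζ.ne_zero hN.ne'))
  have := (hdeg ▸ linearIndependent_pow (K := ℚ) ζ).map' _ hmul
  simpa only [Function.comp_def, LinearMap.mulLeft_apply, ← pow_succ'] using this

theorem exists_linearMap_rat_pow_eq_ite {N : ℕ} (hζ : IsPrimitiveRoot ζ N) (hN : 0 < N) (k : ℕ) :
    ∃ φ : L →ₗ[ℚ] ℚ, ∀ m, 1 ≤ m → m ≤ N.totient → φ (ζ ^ m) = if m = k then 1 else 0 := by
  obtain ⟨φ, hφ⟩ := (hζ.linearIndependent_rat_pow_succ hN).exists_linearMap_apply_eq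
    fun i => if (i : ℕ) + 1 = k then (1 : ℚ) else 0
  refine ⟨φ, fun m hm1 hmN => ?_⟩
  obtain ⟨i, rfl⟩ : ∃ i, m = i + 1 := ⟨m - 1, by omega⟩
  exact hφ ⟨i, by omega⟩

theorem exists_linearMap_rat_pow_add_inv_pow {n : ℕ} (hp : (2 * n + 1).Prime)
    (hζ : IsPrimitiveRoot ζ (2 * n + 1)) :
    ∃ φ : L →ₗ[ℚ] ℚ, ∀ j, 1 ≤ j → j ≤ n → φ (ζ ^ j + ζ⁻¹ ^ j) = if j = n then 1 else 0 := by
  obtain ⟨φ, hφ⟩ := hζ.exists_linearMap_rat_pow_eq_ite (by omega) n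
  rw [Nat.totient_prime hp, Nat.add_sub_cancel] at hφ
  refine ⟨φ, fun j hj1 hjn => ?_⟩
  rw [inv_pow_eq_pow_sub_of_pow_eq_one hζ.pow_eq_one (by omega), map_add, hφ j hj1 (by omega),
    hφ _ (by omega) (by omega), if_neg (show 2 * n + 1 - j ≠ n by omega), add_zero]

end IsPrimitiveRoot

/-- With `K = ℚ(ζ + ζ⁻¹)` for `ζ` a primitive `p`-th root of unity
(`p ≥ 7` prime), `n = (p-1)/2`, `O_K = ℤ[ζ + ζ⁻¹]`, the `ℤ`-submodule `I` of `O_K`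
spanned by `{e₁, …, e_{n-1}, 2eₙ}` is not an ideal of `O_K`: specifically `eₙ ∉ I`
and `e₁ · e_{n-1}` (which lies in `O_K`) does not lie in `I`. -/
theorem span_not_ideal_odd_prime
    (p n : ℕ) (hp : p.Prime) (hp7 : 7 ≤ p) (hn : p = 2 * n + 1)
    (ζ : ℂ) (hζ : IsPrimitiveRoot ζ p)
    (ξ : ℚ⟮ζ + ζ⁻¹⟯) (hξ : (ξ : ℂ) = ζ + ζ⁻¹)
    (e : ℕ → ℚ⟮ζ + ζ⁻¹⟯)
    (he : ∀ j : ℕ, 1 ≤ j → ((e j : ℂ) = ζ ^ j + ζ⁻¹ ^ j))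
    (I : Submodule ℤ ℚ⟮ζ + ζ⁻¹⟯)
    (hI : I = Submodule.span ℤ
      ((e '' {i : ℕ | 1 ≤ i ∧ i ≤ n - 1}) ∪ {2 * e n})) :
    e n ∉ I ∧
    e 1 * e (n - 1) ∈ Algebra.adjoin ℤ ({ξ} : Set ℚ⟮ζ + ζ⁻¹⟯) ∧
    e 1 * e (n - 1) ∉ I ∧
    ¬(∀ z ∈ Algebra.adjoin ℤ ({ξ} : Set ℚ⟮ζ + ζ⁻¹⟯), ∀ x ∈ I, z * x ∈ I) := by
  subst hn
  obtain ⟨φ, hφ⟩ := hζ.exists_linearMap_rat_pow_add_inv_pow hp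
  let ψ : ℚ⟮ζ + ζ⁻¹⟯ →ₗ[ℤ] ℚ := (φ ∘ₗ (ℚ⟮ζ + ζ⁻¹⟯).val.toLinearMap).restrictScalars ℤ
  have hψ (j : ℕ) (hj1 : 1 ≤ j) (hjn : j ≤ n) : ψ (e j) = if j = n then 1 else 0 := by
    simpa [ψ, he j hj1] using hφ j hj1 hjn
  have hdickson (j : ℕ) (hj : 1 ≤ j) : e j = aeval ξ (dickson 1 (1 : ℤ) j) :=
    IntermediateField.eq_aeval_dickson_of_coe_eq (hζ.ne_zero (by omega)) hξ (he j hj)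
  have hmem (j : ℕ) (hj : 1 ≤ j) : e j ∈ Algebra.adjoin ℤ {ξ} :=
    hdickson j hj ▸ aeval_mem_adjoin_singleton ℤ ξ
  have hprod : e 1 * e (n - 1) = e n + e (n - 2) := by
    obtain ⟨j, rfl⟩ : ∃ j, n = j + 2 := ⟨n - 2, by omega⟩
    rw [show j + 2 - 1 = j + 1 by omega, show j + 2 - 2 = j by omega, hdickson 1 le_rfl,
      hdickson _ (by omega), hdickson _ (by omega), hdickson j (by omega), ← map_mul, ← map_add,
      dickson_one, X_mul_dickson_one_one]
  have hnotMem (x) (hx : ψ x = 1) : x ∉ I := hI ▸ notMem_span_union_two_mul ψ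
    (by rintro _ ⟨j, ⟨hj1, hjn⟩, rfl⟩; rw [hψ j hj1 (by omega), if_neg (by omega)])
    (by rw [hψ n (by omega) le_rfl, if_pos rfl]) hx
  have hprod_notMem : e 1 * e (n - 1) ∉ I := hnotMem _ <| by
    rw [hprod, map_add, hψ n (by omega) le_rfl, hψ (n - 2) (by omega) (by omega), if_pos rfl,
      if_neg (by omega), add_zero]
  have hn_sub_one_mem : e (n - 1) ∈ I :=
    hI ▸ Submodule.subset_span (Or.inl ⟨n - 1, ⟨by omega, le_rfl⟩, rfl⟩)
  exact ⟨hnotMem _ (by rw [hψ n (by omega) le_rfl, if_pos rfl]),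
    mul_mem (hmem 1 le_rfl) (hmem _ (by omega)), hprod_notMem,
    fun h => hprod_notMem (h _ (hmem 1 le_rfl) _ hn_sub_one_mem)⟩
end
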